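/- arXiv:1303.4988 — 4 statements merged into one kernel-verified Lean document; each statement's English description precedes it below -/
import Mathlib

section
/- Let A₁, A₂ ∈ M_{p,q}(F) be linearly independent matrices over a field F. Then for every (g₁, g₂) ∈ F², there exist x ∈ F^q and y ∈ F^p with yᵀA₁x = g₁ and yᵀA₂x = g₂. -/
/-!
Let `B x y = (yᵀA₁x, yᵀA₂x)`. Linear independence of `A₁, A₂` says that no nonzero functional
on `F²` kills the image of `B`, so the image spans `F²` and contains a basis `B x y, B x' y'`.
If one of the linear maps `B x`, `B x'`, `B · y`, `B · y'` has two independent values it is onto.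
Otherwise `B x y'` is proportional both to `B x y` and to `B x' y'`, hence zero, and likewise
`B x' y = 0`; then `B (c x + x') (y + d y') = c B x y + d B x' y'` reaches every vector.
-/

open Module Submodule

section

variable {F M N V : Type*} [Field F] [AddCommGroup M] [Module F M] [AddCommGroup N] [Module F N]
  [AddCommGroup V] [Module F V]

lemma exists_smul_eq_of_not_linearIndependent_pair {u w : V} (hu : u ≠ 0)
    (h : ¬LinearIndependent F ![u, w]) : ∃ a : F, a • u = w := by
  simpa [LinearIndependent.pair_iff' hu] using h

lemma LinearIndependent.eq_zero_of_not_linearIndependent_pair {u u' w : V}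
    (hu : LinearIndependent F ![u, u']) (h : ¬LinearIndependent F ![u, w])
    (h' : ¬LinearIndependent F ![u', w]) : w = 0 := by
  have hu₀ : u ≠ 0 := hu.ne_zero 0
  have hu₁ : u' ≠ 0 := hu.ne_zero 1
  obtain ⟨a, rfl⟩ := exists_smul_eq_of_not_linearIndependent_pair hu₀ h
  obtain ⟨b, hb⟩ := exists_smul_eq_of_not_linearIndependent_pair hu₁ h'
  obtain ⟨rfl, -⟩ := LinearIndependent.pair_iff.1 hu a (-b) (by rw [neg_smul, hb, add_neg_cancel])
  exact zero_smul F _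

lemma exists_linearIndependent_pair_of_span_eq_top (hV : finrank F V = 2) {S : Set V}
    (hS : span F S = ⊤) : ∃ u ∈ S, ∃ u' ∈ S, LinearIndependent F ![u, u'] := by
  by_contra! hdep
  obtain ⟨u, huS, hu⟩ : ∃ u ∈ S, u ≠ 0 := by
    by_contra! hzero
    have : (⊤ : Submodule F V) = ⊥ := hS ▸ span_eq_bot.2 hzero
    rw [← finrank_top F V, this, finrank_bot] at hV
    omega
  have hspan : F ∙ u = ⊤ := by
    refine eq_top_iff.2 (hS ▸ span_le.2 fun w hw => ?_)
    obtain ⟨a, rfl⟩ := exists_smul_eq_of_not_linearIndependent_pair hu (hdep u huS w hw)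
    exact smul_mem _ a (mem_span_singleton_self u)
  rw [← finrank_top F V, ← hspan, finrank_span_singleton hu] at hV
  omega

lemma LinearMap.surjective_of_linearIndependent_pair (hV : finrank F V = 2) (f : M →ₗ[F] V)
    {x x' : M} (h : LinearIndependent F ![f x, f x']) : Function.Surjective f := by
  rw [← range_eq_top, eq_top_iff, ← h.span_eq_top_of_card_eq_finrank (by simp [hV])]
  simp [span_le, Set.insert_subset_iff]

theorem LinearMap.exists_apply_apply_eq_of_span_eq_top (hV : finrank F V = 2)
    (B : M →ₗ[F] N →ₗ[F] V) (hB : span F {B x y | (x) (y)} = ⊤) (v : V) :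
    ∃ x y, B x y = v := by
  have of_row {x₀ : M} {y₁ y₂ : N} (h : LinearIndependent F ![B x₀ y₁, B x₀ y₂]) :
      ∃ x y, B x y = v :=
    ⟨x₀, (B x₀).surjective_of_linearIndependent_pair hV h v⟩
  have of_col {y₀ : N} {x₁ x₂ : M} (h : LinearIndependent F ![B x₁ y₀, B x₂ y₀]) :
      ∃ x y, B x y = v := by
    obtain ⟨x, hx⟩ := (B.flip y₀).surjective_of_linearIndependent_pair hV h v
    exact ⟨x, y₀, hx⟩
  obtain ⟨_, ⟨x, y, rfl⟩, _, ⟨x', y', rfl⟩, hu⟩ :=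
    exists_linearIndependent_pair_of_span_eq_top hV hB
  by_cases h₁ : LinearIndependent F ![B x y, B x y']
  · exact of_row h₁
  by_cases h₂ : LinearIndependent F ![B x' y', B x' y]
  · exact of_row h₂
  by_cases h₃ : LinearIndependent F ![B x y, B x' y]
  · exact of_col h₃
  by_cases h₄ : LinearIndependent F ![B x' y', B x y']
  · exact of_col h₄
  have hxy' : B x y' = 0 := hu.eq_zero_of_not_linearIndependent_pair h₁ h₄
  have hx'y : B x' y = 0 := hu.eq_zero_of_not_linearIndependent_pair h₃ h₂
  have hbasis : span F {B x y, B x' y'} = ⊤ := by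
    rw [Set.pair_comm]
    simpa using hu.span_eq_top_of_card_eq_finrank (by simp [hV])
  obtain ⟨c, d, hcd⟩ := mem_span_pair.1 (hbasis ▸ mem_top : v ∈ span F {B x y, B x' y'})
  refine ⟨c • x + x', y + d • y', ?_⟩
  simp [hxy', hx'y, ← hcd]

theorem LinearMap.exists_apply_apply_eq_and_eq_of_linearIndependent (f₁ f₂ : M →ₗ[F] N →ₗ[F] F)
    (h : LinearIndependent F ![f₁, f₂]) (g₁ g₂ : F) : ∃ x y, f₁ x y = g₁ ∧ f₂ x y = g₂ := by
  let B : M →ₗ[F] N →ₗ[F] F × F := LinearMap.mk₂ F (fun x y => (f₁ x y, f₂ x y))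
    (by simp) (by simp) (by simp) (by simp)
  suffices hB : span F {B x y | (x) (y)} = ⊤ by
    obtain ⟨x, y, hxy⟩ := B.exists_apply_apply_eq_of_span_eq_top (by simp) hB (g₁, g₂)
    exact ⟨x, y, Prod.ext_iff.1 hxy⟩
  by_contra hne
  obtain ⟨φ, hφ, hle⟩ := exists_le_ker_of_lt_top _ (lt_top_iff_ne_top.2 hne)
  have hφ_apply (v : F × F) : φ v = v.1 * φ (1, 0) + v.2 * φ (0, 1) := by
    conv_lhs => rw [show v = v.1 • (1, 0) + v.2 • (0, 1) by simp]
    rw [map_add, map_smul, map_smul, smul_eq_mul, smul_eq_mul]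
  have hcomb : φ (1, 0) • f₁ + φ (0, 1) • f₂ = 0 := by
    ext x y
    have hxy : φ (B x y) = 0 := hle (subset_span ⟨x, y, rfl⟩)
    rw [hφ_apply] at hxy
    simp only [B, mk₂_apply] at hxy
    simp only [add_apply, smul_apply, smul_eq_mul, zero_apply]
    linear_combination hxy
  -- `M` is given explicitly: inferring the module structure on bilinear maps times out.
  obtain ⟨h₁, h₂⟩ :=
    (LinearIndependent.pair_iff (R := F) (M := M →ₗ[F] N →ₗ[F] F)).1 h _ _ hcomb
  exact hφ (LinearMap.ext fun v => by simp [hφ_apply v, h₁, h₂])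

end

theorem stmt_1 {F : Type*} [Field F] {p q : ℕ}
    (A₁ A₂ : Matrix (Fin p) (Fin q) F) (h : LinearIndependent F ![A₁, A₂])
    (g₁ g₂ : F) :
    ∃ (x : Fin q → F) (y : Fin p → F),
      dotProduct y (A₁.mulVec x) = g₁ ∧ dotProduct y (A₂.mulVec x) = g₂ := by
  let e := Matrix.toLinearMap₂' F (n := Fin p) (m := Fin q) (N₂ := F) (S₁ := F) (S₂ := F)
  have he : LinearIndependent F ![e A₁, e A₂] := by
    refine (LinearIndependent.pair_iff (R := F) (M := _ →ₗ[F] _ →ₗ[F] F)).2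
      fun s t hst => LinearIndependent.pair_iff.1 h s t (e.injective ?_)
    simpa using hst
  obtain ⟨y, x, hxy⟩ :=
    LinearMap.exists_apply_apply_eq_and_eq_of_linearIndependent _ _ he g₁ g₂
  exact ⟨x, y, by simpa [e, Matrix.toLinearMap₂'_apply'] using hxy⟩
end

section
/- Let A₁, A₂ ∈ M_{p,q}(F) be matrices over a field F such that for every x ∈ F^q, the span of {A₁x, A₂x} equals the span of {A₂x}. Then A₁ is a scalar multiple of A₂. -/
theorem stmt_2 {F : Type*} [Field F] {p q : ℕ}
    (A₁ A₂ : Matrix (Fin p) (Fin q) F)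
    (h : ∀ x : Fin q → F, Submodule.span F {A₁.mulVec x, A₂.mulVec x} =
      Submodule.span F {A₂.mulVec x}) :
    ∃ c : F, A₁ = c • A₂ := by
  have key : ∀ x, ∃ a : F, A₁.mulVec x = a • A₂.mulVec x := by
    intro x
    have h1 : A₁.mulVec x ∈ Submodule.span F {A₂.mulVec x} := by
      rw [← h x]
      exact Submodule.subset_span (Set.mem_insert _ _)
    obtain ⟨a, ha⟩ := Submodule.mem_span_singleton.mp h1
    exact ⟨a, ha.symm⟩
  have hker : ∀ x, A₂.mulVec x = 0 → A₁.mulVec x = 0 := by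
    intro x hx
    obtain ⟨a, ha⟩ := key x
    rw [ha, hx, smul_zero]
  by_cases hA2 : ∀ x, A₂.mulVec x = 0
  · refine ⟨0, ?_⟩
    ext i j
    have h1 := congrFun (hker (Pi.single j 1) (hA2 _)) i
    simp [Matrix.mulVec_single] at h1 ⊢
    exact h1
  · push_neg at hA2
    obtain ⟨x₀, hx₀⟩ := hA2
    obtain ⟨c, hc⟩ := key x₀
    have main : ∀ x, A₁.mulVec x = c • A₂.mulVec x := by
      intro x
      by_cases hmem : ∃ t : F, A₂.mulVec x = t • A₂.mulVec x₀
      · obtain ⟨t, ht⟩ := hmem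
        have h0 : A₂.mulVec (x - t • x₀) = 0 := by
          rw [Matrix.mulVec_sub, Matrix.mulVec_smul, ht, sub_self]
        have h1 := hker _ h0
        rw [Matrix.mulVec_sub, Matrix.mulVec_smul, sub_eq_zero] at h1
        rw [h1, hc, ht, smul_smul, smul_smul, mul_comm]
      · push_neg at hmem
        obtain ⟨a, ha⟩ := key x
        obtain ⟨b, hb⟩ := key (x + x₀)
        rw [Matrix.mulVec_add, Matrix.mulVec_add, ha, hc, smul_add] at hb
        have hab : a = b := by
          by_contra hne
          apply hmem ((a - b)⁻¹ * (b - c))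
          have h2 : (a - b) • A₂.mulVec x = (b - c) • A₂.mulVec x₀ := by
            rw [sub_smul, sub_smul]
            linear_combination (norm := module) hb
          have h3 : A₂.mulVec x = ((a - b)⁻¹ * (b - c)) • A₂.mulVec x₀ := by
            rw [mul_smul, ← h2, smul_smul, inv_mul_cancel₀ (sub_ne_zero.mpr hne),
              one_smul]
          exact h3
        subst hab
        have h4 : (c - a) • A₂.mulVec x₀ = 0 := by
          rw [sub_smul]
          linear_combination (norm := module) hb
        rcases smul_eq_zero.mp h4 with h5 | h5
        · rw [ha, sub_eq_zero.mp h5]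
        · exact absurd h5 hx₀
    refine ⟨c, ?_⟩
    ext i j
    have h1 := congrFun (main (Pi.single j 1)) i
    simp [Matrix.mulVec_single] at h1 ⊢
    exact h1
end

section
/- Let A₁, A₂ ∈ M_{p,q}(F) over a field F, and suppose the system yᵀA₁x = 1, yᵀA₂x = 0 has no solution (x,y) ∈ F^q × F^p. Then A₁ and A₂ are linearly dependent. -/
/-!
The hypothesis says that `yᵀ A₂ x = 0` forces `yᵀ A₁ x = 0` (otherwise rescale `x`). For fixed `x`
this is an inclusion of kernels of two linear forms in `y`, so `A₁ x` is a multiple of `A₂ x`.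
A linear map that sends every vector to a multiple of its image under another linear map is a
constant multiple of it: comparing the coefficients at `v`, `w` and `v + w` forces them to agree
whenever `A₂ v`, `A₂ w` are independent, and the dependent case reduces to `ker A₂ ≤ ker A₁`.
-/

open Matrix

namespace LinearMap

variable {K V W : Type*} [Field K] [AddCommGroup V] [Module K V] [AddCommGroup W] [Module K W]

theorem coeff_eq_of_linearIndependent_pair {f g : V →ₗ[K] W} (h : ∀ v, ∃ c : K, f v = c • g v)
    {v w : V} {a b : K} (hvw : LinearIndependent K ![g v, g w])
    (ha : f v = a • g v) (hb : f w = b • g w) : a = b := by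
  obtain ⟨c, hc⟩ := h (v + w)
  have hcomb : (a - c) • g v + (b - c) • g w = 0 := by
    rw [map_add, map_add, ha, hb] at hc
    rw [sub_smul, sub_smul, sub_add_sub_comm, hc, smul_add, sub_self]
  obtain ⟨hac, hbc⟩ := LinearIndependent.pair_iff.mp hvw _ _ hcomb
  rw [sub_eq_zero.mp hac, sub_eq_zero.mp hbc]

theorem exists_eq_smul_of_forall_exists_apply_eq_smul {f g : V →ₗ[K] W}
    (h : ∀ v, ∃ c : K, f v = c • g v) : ∃ c : K, f = c • g := by
  have hker {v : V} (hv : g v = 0) : f v = 0 := by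
    obtain ⟨c, hc⟩ := h v
    rw [hc, hv, smul_zero]
  by_cases hg : g = 0
  · exact ⟨0, ext fun v => by simpa [hg] using hker (by simp [hg])⟩
  obtain ⟨v₀, hv₀⟩ : ∃ v₀, g v₀ ≠ 0 := by simpa [LinearMap.ext_iff] using hg
  obtain ⟨c₀, hc₀⟩ := h v₀
  refine ⟨c₀, ext fun v => ?_⟩
  obtain ⟨a, ha⟩ := h v
  by_cases hind : LinearIndependent K ![g v₀, g v]
  · rw [smul_apply, ha, coeff_eq_of_linearIndependent_pair h hind hc₀ ha]
  · obtain ⟨l, hl⟩ : ∃ l : K, l • g v₀ = g v := by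
      simpa [LinearIndependent.pair_iff' hv₀] using hind
    have hfv : f v = l • f v₀ := by
      rw [← sub_eq_zero, ← map_smul, ← map_sub]
      exact hker (by rw [map_sub, map_smul, hl, sub_self])
    rw [smul_apply, hfv, hc₀, ← hl, smul_comm]

theorem exists_eq_smul_of_ker_le {f g : V →ₗ[K] K} (h : ker g ≤ ker f) : ∃ c : K, f = c • g := by
  refine exists_eq_smul_of_forall_exists_apply_eq_smul fun v => ?_
  by_cases hv : g v = 0
  · exact ⟨0, by rw [zero_smul]; exact h hv⟩
  · exact ⟨f v / g v, by rw [smul_eq_mul, div_mul_cancel₀ _ hv]⟩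

end LinearMap

theorem Matrix.exists_eq_smul_of_dotProduct_eq_zero_imp {K n : Type*} [Field K] [Fintype n]
    {u v : n → K} (h : ∀ y, y ⬝ᵥ v = 0 → y ⬝ᵥ u = 0) : ∃ c : K, u = c • v := by
  obtain ⟨c, hc⟩ := LinearMap.exists_eq_smul_of_ker_le
    (f := dotProductBilin K K u) (g := dotProductBilin K K v) fun y hy => by
      simpa [dotProduct_comm] using h y (by simpa [dotProduct_comm] using hy)
  exact ⟨c, dotProduct_eq _ _ fun y => by simpa using LinearMap.congr_fun hc y⟩

theorem stmt_3 {F : Type*} [Field F] {p q : ℕ}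
    (A₁ A₂ : Matrix (Fin p) (Fin q) F)
    (h : ¬ ∃ (x : Fin q → F) (y : Fin p → F),
      dotProduct y (A₁.mulVec x) = 1 ∧ dotProduct y (A₂.mulVec x) = 0) :
    ¬ LinearIndependent F ![A₁, A₂] := by
  have hker (x : Fin q → F) (y : Fin p → F) (h₂ : y ⬝ᵥ A₂ *ᵥ x = 0) : y ⬝ᵥ A₁ *ᵥ x = 0 := by
    by_contra h₁
    refine h ⟨(y ⬝ᵥ A₁ *ᵥ x)⁻¹ • x, y, ?_, ?_⟩ <;>
      simp only [mulVec_smul, dotProduct_smul, smul_eq_mul, inv_mul_cancel₀ h₁, h₂, mul_zero]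
  obtain ⟨c, hc⟩ := LinearMap.exists_eq_smul_of_forall_exists_apply_eq_smul
    (f := toLin' A₁) (g := toLin' A₂) fun x => by
      simpa using exists_eq_smul_of_dotProduct_eq_zero_imp (hker x)
  have hA : A₁ = c • A₂ := toLin'.injective (by rw [hc, map_smul])
  intro hind
  exact one_ne_zero (LinearIndependent.pair_iff.mp hind 1 (-c)
    (by rw [hA, one_smul, neg_smul, add_neg_cancel])).1
end

section
/- Consider the bilinear system over a field F: x₁y₂ + x₂y₃ = g₁, x₁y₁ + x₁y₃ = g₂, x₁y₂ − x₂y₁ = g₃. For every (g₁,g₂,g₃) ∈ F³ this system has a solution (x,y) ∈ F² × F³. -/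
/-! Subtracting the third equation from the first gives `x₂ (y₁ + y₃) = g₁ - g₃`, while the second
reads `x₁ (y₁ + y₃) = g₂`. If `g₁ = g₃`, take `x = (1, 0)`; otherwise take `x₂ = 1`,
`y₁ + y₃ = g₁ - g₃ ≠ 0` and solve for `x₁`. -/

theorem stmt_17 {F : Type*} [Field F] (g₁ g₂ g₃ : F) :
    ∃ x₁ x₂ y₁ y₂ y₃ : F,
      x₁ * y₂ + x₂ * y₃ = g₁ ∧ x₁ * y₁ + x₁ * y₃ = g₂ ∧ x₁ * y₂ - x₂ * y₁ = g₃ := by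
  by_cases h : g₁ = g₃
  · exact ⟨1, 0, g₂, g₁, 0, by ring, by ring, by rw [h]; ring⟩
  · have hd : g₁ - g₃ ≠ 0 := sub_ne_zero.mpr h
    refine ⟨g₂ / (g₁ - g₃), 1, -g₃, 0, g₁, by ring, ?_, by ring⟩
    field_simp
    ring
end
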